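/- Let a1 > 0 and a2 > 0, and let ϑ_1 ~ Inv-Ga(a1, 1) and ϑ_2 ~ Inv-Ga(a2, 1) be independent real random variables. Then the law of the product θ_2 = ϑ_1·ϑ_2 has density on (0, ∞) given by θ ↦ (θ^{−a2−1} / (Γ(a1)·Γ(a2))) · ∫_0^∞ x^{−(a1−a2+1)} · e^{−1/x − x/θ} dx; that is, for every θ > 0, P(ϑ_1·ϑ_2 ≤ θ) = ∫_0^θ (t^{−a2−1}/(Γ(a1)Γ(a2))) · (∫_0^∞ x^{−(a1−a2+1)} e^{−1/x − x/t} dx) dt. -/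

import Mathlib

open MeasureTheory ProbabilityTheory Real Filter Set

/-- Density of the inverse gamma distribution `Inv-Ga(a, b)`: equal to
`b^a / Γ(a) · x^{-(a+1)} · e^{-b/x}` for `x > 0` and `0` otherwise. -/
noncomputable def invGammaPDF (a b : ℝ) (x : ℝ) : ℝ :=
  if 0 < x then b ^ a / Real.Gamma a * x ^ (-(a + 1)) * Real.exp (-b / x) else 0

/-- The inverse gamma distribution `Inv-Ga(a, b)` as a measure on `ℝ`. -/
noncomputable def invGammaMeasure (a b : ℝ) : Measure ℝ :=
  MeasureTheory.volume.withDensity (fun x => ENNReal.ofReal (invGammaPDF a b x))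

/-!
Given `ϑ₁ = x > 0`, the event `ϑ₁ ϑ₂ ≤ θ` is `ϑ₂ ∈ (0, θ / x]`, and the substitution `y = t / x`
turns its probability into `∫_0^θ f₂(t / x) / x dt`. Integrating against `f₁(x) dx` and swapping
the two integrals (Tonelli) shows that `ϑ₁ ϑ₂` has density `t ↦ ∫_0^∞ f₁(x) f₂(t / x) dx / x`.
For inverse gamma factors this integrand is
`t^{-a₂-1} / (Γ(a₁) Γ(a₂)) · x^{-(a₁-a₂+1)} e^{-1/x - x/t}`, which is integrable in `x` because
`e^{-1/x} ≤ n! xⁿ` tames every power of `x` at `0`; so the Lebesgue integrals are finite and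
agree with the Bochner integrals of the statement.
-/

open scoped ENNReal Nat

section ProductOfPositiveVariables

lemma setLIntegral_Ioc_div {F : ℝ → ℝ≥0∞} (hF : Measurable F) {x : ℝ} (hx : 0 < x) (θ : ℝ) :
    ∫⁻ t in Ioc 0 θ, F (t / x) = ENNReal.ofReal x * ∫⁻ y in Ioc 0 (θ / x), F y := by
  have hmap : Measure.map (· * x⁻¹) volume = ENNReal.ofReal x • (volume : Measure ℝ) := by
    rw [Real.map_volume_mul_right (inv_ne_zero hx.ne'), inv_inv, abs_of_pos hx]
  have hpre : (· * x⁻¹) ⁻¹' Ioc 0 (θ * x⁻¹) = Ioc 0 θ := by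
    simp [preimage_mul_const_Ioc₀ _ _ (inv_pos.2 hx), hx.ne']
  simp_rw [div_eq_mul_inv]
  rw [← hpre, ← setLIntegral_map measurableSet_Ioc hF (measurable_mul_const _), hmap,
    Measure.restrict_smul, lintegral_smul_measure, smul_eq_mul]

variable {f g : ℝ → ℝ≥0∞}

lemma withDensity_setOf_mul_le (hg : Measurable g) (hgs : g.support ⊆ Ioi 0) {x : ℝ}
    (hx : 0 < x) (θ : ℝ) :
    volume.withDensity g {y | x * y ≤ θ} = ∫⁻ t in Ioc 0 θ, g (t / x) * ENNReal.ofReal x⁻¹ := by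
  have hset : Ioi 0 ∩ {y | x * y ≤ θ} = Ioc 0 (θ / x) := by
    ext y
    simp only [mem_inter_iff, mem_Ioi, mem_ofPred_eq, mem_Ioc, le_div_iff₀ hx, mul_comm y]
  rw [withDensity_apply _ (measurableSet_le (by fun_prop) measurable_const),
    ← setLIntegral_eq_of_support_subset hgs, Measure.restrict_restrict measurableSet_Ioi, hset,
    lintegral_mul_const' _ _ ENNReal.ofReal_ne_top, setLIntegral_Ioc_div hg hx, mul_right_comm,
    ← ENNReal.ofReal_mul hx.le, mul_inv_cancel₀ hx.ne', ENNReal.ofReal_one, one_mul]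

theorem withDensity_prod_withDensity_setOf_mul_le (hf : Measurable f) (hg : Measurable g)
    (hfs : f.support ⊆ Ioi 0) (hgs : g.support ⊆ Ioi 0) (θ : ℝ) :
    ((volume.withDensity f).prod (volume.withDensity g)) {p | p.1 * p.2 ≤ θ} =
      ∫⁻ t in Ioc 0 θ, ∫⁻ x in Ioi 0, f x * g (t / x) * ENNReal.ofReal x⁻¹ := by
  have hS : MeasurableSet {p : ℝ × ℝ | p.1 * p.2 ≤ θ} :=
    measurableSet_le (by fun_prop) measurable_const
  rw [Measure.prod_apply hS,
    lintegral_withDensity_eq_lintegral_mul _ hf (measurable_measure_prodMk_left hS)]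
  simp only [Pi.mul_apply]
  rw [← setLIntegral_eq_of_support_subset ((Function.support_mul_subset_left _ _).trans hfs)]
  calc ∫⁻ x in Ioi 0, f x * volume.withDensity g {y | x * y ≤ θ}
      = ∫⁻ x in Ioi 0, ∫⁻ t in Ioc 0 θ, f x * g (t / x) * ENNReal.ofReal x⁻¹ := by
        refine setLIntegral_congr_fun measurableSet_Ioi fun x hx => ?_
        simp_rw [withDensity_setOf_mul_le hg hgs hx, mul_assoc]
        exact (lintegral_const_mul _ (by fun_prop)).symm
    _ = _ := lintegral_lintegral_swap (by fun_prop)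

end ProductOfPositiveVariables

lemma exp_neg_one_div_le_factorial_mul_pow {x : ℝ} (hx : 0 < x) (n : ℕ) :
    exp (-1 / x) ≤ n ! * x ^ n :=
  calc exp (-1 / x) = (exp x⁻¹)⁻¹ := by rw [neg_div, one_div, exp_neg]
    _ ≤ (x⁻¹ ^ n / n !)⁻¹ :=
      inv_anti₀ (by positivity) (pow_div_factorial_le_exp _ (inv_nonneg.2 hx.le) n)
    _ = n ! * x ^ n := by rw [inv_pow, inv_div, div_inv_eq_mul]

lemma integrableOn_rpow_mul_exp_neg_one_div_sub_div (p : ℝ) {t : ℝ} (ht : 0 < t) :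
    IntegrableOn (fun x => x ^ p * exp (-1 / x - x / t)) (Ioi 0) := by
  obtain ⟨n, hn⟩ := exists_nat_ge (-p)
  have hdom : IntegrableOn (fun x : ℝ => n ! * (x ^ (p + n) * exp (-t⁻¹ * x ^ (1 : ℝ)))) (Ioi 0) :=
    (integrableOn_rpow_mul_exp_neg_mul_rpow (by linarith) one_pos (inv_pos.2 ht)).const_mul _
  refine hdom.mono' (by fun_prop : Measurable _).aestronglyMeasurable ?_
  filter_upwards [ae_restrict_mem measurableSet_Ioi] with x (hx : 0 < x)
  rw [norm_of_nonneg (by positivity), rpow_one, rpow_add hx, rpow_natCast, sub_eq_add_neg, exp_add,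
    neg_mul, ← div_eq_inv_mul]
  calc x ^ p * (exp (-1 / x) * exp (-(x / t)))
      ≤ x ^ p * (n ! * x ^ n * exp (-(x / t))) := by
        gcongr
        exact exp_neg_one_div_le_factorial_mul_pow hx n
    _ = n ! * (x ^ p * x ^ n * exp (-(x / t))) := by ring

lemma measurable_invGammaPDF (a b : ℝ) : Measurable (invGammaPDF a b) :=
  Measurable.ite measurableSet_Ioi (by fun_prop) measurable_const

lemma invGammaPDF_nonneg {a b : ℝ} (ha : 0 < a) (hb : 0 ≤ b) (x : ℝ) : 0 ≤ invGammaPDF a b x := by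
  unfold invGammaPDF
  split_ifs
  · have := Gamma_pos_of_pos ha
    positivity
  · rfl

lemma support_ofReal_invGammaPDF_subset (a b : ℝ) :
    (fun x => ENNReal.ofReal (invGammaPDF a b x)).support ⊆ Ioi 0 := by
  intro x hx
  by_contra hx0
  exact hx (by simp [invGammaPDF, show ¬0 < x from hx0])

lemma invGammaPDF_mul_invGammaPDF_div (a₁ a₂ : ℝ) {t x : ℝ} (ht : 0 < t) (hx : 0 < x) :
    invGammaPDF a₁ 1 x * invGammaPDF a₂ 1 (t / x) * x⁻¹ =
      t ^ (-a₂ - 1) / (Gamma a₁ * Gamma a₂) * (x ^ (-(a₁ - a₂ + 1)) * exp (-1 / x - x / t)) := by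
  have hpow : x ^ (-(a₁ - a₂ + 1)) = x ^ (-(a₁ + 1)) / x ^ (-(a₂ + 1)) / x := by
    rw [← rpow_sub hx, ← rpow_sub_one hx.ne']
    ring_nf
  have hexp : exp (-1 / x - x / t) = exp (-1 / x) * exp (-1 / (t / x)) := by
    rw [← exp_add]
    congr 1
    field_simp
    ring
  simp only [invGammaPDF, if_pos hx, if_pos (div_pos ht hx), one_rpow, div_rpow ht.le hx.le,
    hpow, hexp, show -a₂ - 1 = -(a₂ + 1) by ring]
  field_simp

noncomputable def invGammaProductPDF (a₁ a₂ t : ℝ) : ℝ :=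
  t ^ (-a₂ - 1) / (Gamma a₁ * Gamma a₂) *
    ∫ x in Ioi 0, x ^ (-(a₁ - a₂ + 1)) * exp (-1 / x - x / t)

lemma invGammaProductPDF_nonneg {a₁ a₂ t : ℝ} (ha₁ : 0 < a₁) (ha₂ : 0 < a₂) (ht : 0 < t) :
    0 ≤ invGammaProductPDF a₁ a₂ t := by
  have := Gamma_pos_of_pos ha₁
  have := Gamma_pos_of_pos ha₂
  refine mul_nonneg (by positivity) (setIntegral_nonneg measurableSet_Ioi fun x hx => ?_)
  have : 0 < x := hx
  positivity

lemma measurable_invGammaProductPDF (a₁ a₂ : ℝ) : Measurable (invGammaProductPDF a₁ a₂) :=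
  (by fun_prop : Measurable fun t : ℝ => t ^ (-a₂ - 1) / (Gamma a₁ * Gamma a₂)).mul
    (StronglyMeasurable.integral_prod_right'
      (f := fun p : ℝ × ℝ => p.2 ^ (-(a₁ - a₂ + 1)) * exp (-1 / p.2 - p.2 / p.1))
      (by fun_prop : Measurable _).stronglyMeasurable).measurable

lemma lintegral_invGammaPDF_mul_invGammaPDF_div {a₁ a₂ t : ℝ} (ha₁ : 0 < a₁) (ha₂ : 0 < a₂)
    (ht : 0 < t) :
    ∫⁻ x in Ioi 0, ENNReal.ofReal (invGammaPDF a₁ 1 x) * ENNReal.ofReal (invGammaPDF a₂ 1 (t / x)) *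
        ENNReal.ofReal x⁻¹ = ENNReal.ofReal (invGammaProductPDF a₁ a₂ t) := by
  have hc : 0 ≤ t ^ (-a₂ - 1) / (Gamma a₁ * Gamma a₂) := by
    have := Gamma_pos_of_pos ha₁
    have := Gamma_pos_of_pos ha₂
    positivity
  have hk : 0 ≤ᵐ[volume.restrict (Ioi 0)]
      fun x : ℝ => x ^ (-(a₁ - a₂ + 1)) * exp (-1 / x - x / t) := by
    filter_upwards [ae_restrict_mem measurableSet_Ioi] with x (hx : 0 < x)
    positivity
  rw [invGammaProductPDF, ENNReal.ofReal_mul hc,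
    ofReal_integral_eq_lintegral_ofReal (integrableOn_rpow_mul_exp_neg_one_div_sub_div _ ht) hk,
    ← lintegral_const_mul _ (by fun_prop)]
  refine setLIntegral_congr_fun measurableSet_Ioi fun x (hx : 0 < x) => ?_
  rw [← ENNReal.ofReal_mul hc, ← invGammaPDF_mul_invGammaPDF_div a₁ a₂ ht hx,
    ENNReal.ofReal_mul (mul_nonneg (invGammaPDF_nonneg ha₁ zero_le_one _)
      (invGammaPDF_nonneg ha₂ zero_le_one _)),
    ENNReal.ofReal_mul (invGammaPDF_nonneg ha₁ zero_le_one _)]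

theorem invGamma_product_density_general
    {Ω : Type*} [MeasureSpace Ω]
    (a1 a2 : ℝ) (ha1 : 0 < a1) (ha2 : 0 < a2)
    (ϑ₁ ϑ₂ : Ω → ℝ) (hmeas₁ : Measurable ϑ₁) (hmeas₂ : Measurable ϑ₂)
    (hindep : IndepFun ϑ₁ ϑ₂ ℙ)
    (hlaw₁ : Measure.map ϑ₁ ℙ = invGammaMeasure a1 1)
    (hlaw₂ : Measure.map ϑ₂ ℙ = invGammaMeasure a2 1) :
    ∀ θ : ℝ, 0 < θ →
      (ℙ {ω | ϑ₁ ω * ϑ₂ ω ≤ θ}).toReal =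
        ∫ t in Set.Ioc (0 : ℝ) θ,
          t ^ (-a2 - 1) / (Real.Gamma a1 * Real.Gamma a2) *
            ∫ x in Set.Ioi (0 : ℝ), x ^ (-(a1 - a2 + 1)) * Real.exp (-1 / x - x / t) := by
  intro θ _
  have hσ : ∀ a, SigmaFinite (invGammaMeasure a 1) := fun _ => SigmaFinite.withDensity_ofReal _
  have hjoint : Measure.map (fun ω => (ϑ₁ ω, ϑ₂ ω)) ℙ =
      (invGammaMeasure a1 1).prod (invGammaMeasure a2 1) := by
    rw [← hlaw₁, ← hlaw₂]
    exact (indepFun_iff_map_prod_eq_prod_map_map' hmeas₁.aemeasurable hmeas₂.aemeasurable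
      (hlaw₁ ▸ hσ a1) (hlaw₂ ▸ hσ a2)).1 hindep
  have hcdf : ℙ {ω | ϑ₁ ω * ϑ₂ ω ≤ θ} =
      ∫⁻ t in Ioc 0 θ, ENNReal.ofReal (invGammaProductPDF a1 a2 t) := by
    have hS : MeasurableSet {p : ℝ × ℝ | p.1 * p.2 ≤ θ} :=
      measurableSet_le (by fun_prop) measurable_const
    have hpdf (a : ℝ) := (measurable_invGammaPDF a 1).ennreal_ofReal
    have hpre : ℙ {ω | ϑ₁ ω * ϑ₂ ω ≤ θ} =
        Measure.map (fun ω => (ϑ₁ ω, ϑ₂ ω)) ℙ {p | p.1 * p.2 ≤ θ} :=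
      (Measure.map_apply (hmeas₁.prodMk hmeas₂) hS).symm
    rw [hpre, hjoint,
      invGammaMeasure, invGammaMeasure, withDensity_prod_withDensity_setOf_mul_le (hpdf a1)
        (hpdf a2) (support_ofReal_invGammaPDF_subset _ _) (support_ofReal_invGammaPDF_subset _ _)]
    exact setLIntegral_congr_fun measurableSet_Ioc fun t ht =>
      lintegral_invGammaPDF_mul_invGammaPDF_div ha1 ha2 ht.1
  rw [hcdf, ← integral_eq_lintegral_of_nonneg_ae
    ((ae_restrict_mem measurableSet_Ioc).mono fun t ht => invGammaProductPDF_nonneg ha1 ha2 ht.1)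
    (measurable_invGammaProductPDF a1 a2).aestronglyMeasurable]
  rfl

/-- the CDF of the product `ϑ_1·ϑ_2` of independent `Inv-Ga(a1, 1)` and
`Inv-Ga(a2, 1)` variables is given by integrating the density
`θ ↦ (θ^{-a2-1}/(Γ(a1)Γ(a2))) ∫_0^∞ x^{-(a1-a2+1)} e^{-1/x - x/θ} dx` over `(0, θ]`. -/
theorem invGamma_product_density
    {Ω : Type*} [MeasureSpace Ω] [IsProbabilityMeasure (ℙ : Measure Ω)]
    (a1 a2 : ℝ) (ha1 : 0 < a1) (ha2 : 0 < a2)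
    (ϑ₁ ϑ₂ : Ω → ℝ) (hmeas₁ : Measurable ϑ₁) (hmeas₂ : Measurable ϑ₂)
    (hindep : IndepFun ϑ₁ ϑ₂ ℙ)
    (hlaw₁ : Measure.map ϑ₁ ℙ = invGammaMeasure a1 1)
    (hlaw₂ : Measure.map ϑ₂ ℙ = invGammaMeasure a2 1) :
    ∀ θ : ℝ, 0 < θ →
      (ℙ {ω | ϑ₁ ω * ϑ₂ ω ≤ θ}).toReal =
        ∫ t in Set.Ioc (0 : ℝ) θ,
          t ^ (-a2 - 1) / (Real.Gamma a1 * Real.Gamma a2) *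
            ∫ x in Set.Ioi (0 : ℝ), x ^ (-(a1 - a2 + 1)) * Real.exp (-1 / x - x / t) :=
  invGamma_product_density_general a1 a2 ha1 ha2 ϑ₁ ϑ₂ hmeas₁ hmeas₂ hindep hlaw₁ hlaw₂
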